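/- arXiv:1801.05868 — 2 statements merged into one kernel-verified Lean document; each statement's English description precedes it below -/
import Mathlib

section
/- Let S be a finite set with at least two elements, f : S → ℝ with a unique global minimizer s* (i.e., f(s) > f(s*) for all s ≠ s*), and for τ > 0 let π_τ(s) = e^{−f(s)/τ} / Σ_{s'∈S} e^{−f(s')/τ}. Then the map τ ↦ π_τ(s*) is strictly decreasing on (0, ∞); that is, as the smooth parameter τ decreases, the probability assigned to the globally optimal solution strictly increases. -/
open Real

lemma gibbs_rewrite {S : Type*} [Fintype S] (f : S → ℝ) (sstar : S) {τ : ℝ} (hτ : 0 < τ) :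
    Real.exp (-f sstar / τ) / ∑ s' : S, Real.exp (-f s' / τ)
      = 1 / ∑ s' : S, Real.exp ((f sstar - f s') / τ) := by
  have h : ∀ s' : S, Real.exp ((f sstar - f s') / τ)
      = Real.exp (-f s' / τ) * Real.exp (f sstar / τ) := by
    intro s'
    rw [← Real.exp_add]
    ring_nf
  rw [Finset.sum_congr rfl (fun s' _ => h s'), ← Finset.sum_mul]
  rw [one_div, mul_inv, ← Real.exp_neg, ← neg_div]
  ring

/-- If `f` has a unique global minimizer `s*` on a finite set with at least two
elements, then the Gibbs probability `π_τ(s*) = e^{-f(s*)/τ} / Σ_{s'} e^{-f(s')/τ}`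
is strictly decreasing in the temperature `τ` on `(0, ∞)`. -/
theorem gibbs_strictAntiOn_of_unique_min
    {S : Type*} [Fintype S] (hcard : 2 ≤ Fintype.card S)
    (f : S → ℝ) (sstar : S) (hmin : ∀ s : S, s ≠ sstar → f sstar < f s) :
    StrictAntiOn (fun τ : ℝ =>
        Real.exp (-f sstar / τ) / ∑ s' : S, Real.exp (-f s' / τ))
      (Set.Ioi (0 : ℝ)) := by
  intro a ha b hb hab
  simp only [Set.mem_Ioi] at ha hb
  simp only
  rw [gibbs_rewrite f sstar ha, gibbs_rewrite f sstar hb]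
  have hpos : (0 : ℝ) < ∑ s' : S, Real.exp ((f sstar - f s') / a) :=
    Finset.sum_pos (fun s _ => Real.exp_pos _)
      (Finset.univ_nonempty_iff.mpr ⟨sstar⟩)
  have hsum : ∑ s' : S, Real.exp ((f sstar - f s') / a)
      < ∑ s' : S, Real.exp ((f sstar - f s') / b) := by
    obtain ⟨t, ht⟩ := Fintype.exists_ne_of_one_lt_card (by omega) sstar
    refine Finset.sum_lt_sum (fun s _ => ?_) ⟨t, Finset.mem_univ t, ?_⟩
    · apply Real.exp_le_exp.mpr
      rcases eq_or_ne s sstar with rfl | hs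
      · simp
      · have hc : f sstar - f s < 0 := by linarith [hmin s hs]
        rw [div_le_div_iff₀ ha hb]
        nlinarith
    · apply Real.exp_lt_exp.mpr
      have hc : f sstar - f t < 0 := by linarith [hmin t ht]
      rw [div_lt_div_iff₀ ha hb]
      nlinarith
  exact one_div_lt_one_div_of_lt hpos hsum
end

section
/- (Deterministic form of the energy-deficit-queue bound in Theorem 2.) Let q : ℕ → ℝ with q(0) = 0 and q(t) ≥ 0 for all t, let L(t) = (1/2)·q(t)², let D : ℕ → ℝ, V ≥ 0, B ≥ 0, ε > 0, and Ψ ∈ ℝ. Suppose for every t: L(t+1) − L(t) + V·D(t) ≤ B + V·Ψ − ε·q(t). Then for every T ≥ 1, (1/T)·Σ_{t=0}^{T−1} q(t) ≤ B/ε + (V/ε)·(Ψ − (1/T)·Σ_{t=0}^{T−1} D(t)). In particular, if additionally D(t) ≥ D_min for all t, then (1/T)·Σ_{t=0}^{T−1} q(t) ≤ B/ε + (V/ε)·(Ψ − D_min), exhibiting the O(V) growth of the queue backlog. -/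
open Finset

/-- Deterministic form of the energy-deficit-queue bound in Theorem 2: if
`q(0)=0`, `q(t) ≥ 0`, `L(t) = q(t)²/2` and
`L(t+1) − L(t) + V·D(t) ≤ B + V·Ψ − ε·q(t)` for all `t`, then for every `T ≥ 1`
the time-average queue backlog satisfies
`(1/T)·Σ_{t<T} q(t) ≤ B/ε + (V/ε)·(Ψ − (1/T)·Σ_{t<T} D(t))`; in particular, if
`D(t) ≥ D_min` for all `t`, then
`(1/T)·Σ_{t<T} q(t) ≤ B/ε + (V/ε)·(Ψ − D_min)`. -/
theorem drift_plus_cost_queue_bound (q D : ℕ → ℝ) (V B ε Ψ : ℝ)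
    (h0 : q 0 = 0) (hqpos : ∀ t, 0 ≤ q t) (hV : 0 ≤ V) (hB : 0 ≤ B) (hε : 0 < ε)
    (hdrift : ∀ t, (1 / 2) * (q (t + 1)) ^ 2 - (1 / 2) * (q t) ^ 2 + V * D t ≤
      B + V * Ψ - ε * q t) :
    (∀ T : ℕ, 1 ≤ T →
      (1 / (T : ℝ)) * ∑ t ∈ Finset.range T, q t ≤
        B / ε + (V / ε) * (Ψ - (1 / (T : ℝ)) * ∑ t ∈ Finset.range T, D t)) ∧
    (∀ Dmin : ℝ, (∀ t, Dmin ≤ D t) → ∀ T : ℕ, 1 ≤ T →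
      (1 / (T : ℝ)) * ∑ t ∈ Finset.range T, q t ≤ B / ε + (V / ε) * (Ψ - Dmin)) := by
  have key : ∀ T : ℕ, 1 ≤ T →
      ε * ∑ t ∈ Finset.range T, q t ≤
        T * B + V * (T * Ψ - ∑ t ∈ Finset.range T, D t) := by
    intro T hT
    have hsum : ∑ t ∈ Finset.range T,
        ((1 / 2) * (q (t + 1)) ^ 2 - (1 / 2) * (q t) ^ 2 + V * D t) ≤
        ∑ t ∈ Finset.range T, (B + V * Ψ - ε * q t) :=
      Finset.sum_le_sum fun t _ => hdrift t
    have htel : ∑ t ∈ Finset.range T,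
        ((1 / 2) * (q (t + 1)) ^ 2 - (1 / 2) * (q t) ^ 2) =
        (1 / 2) * (q T) ^ 2 - (1 / 2) * (q 0) ^ 2 :=
      Finset.sum_range_sub (fun t => (1 / 2) * (q t) ^ 2) T
    have h1 : ∑ t ∈ Finset.range T,
        ((1 / 2) * (q (t + 1)) ^ 2 - (1 / 2) * (q t) ^ 2 + V * D t) =
        (1 / 2) * (q T) ^ 2 + V * ∑ t ∈ Finset.range T, D t := by
      rw [Finset.sum_add_distrib, htel, h0, ← Finset.mul_sum]; ring
    have h2 : ∑ t ∈ Finset.range T, (B + V * Ψ - ε * q t) =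
        T * (B + V * Ψ) - ε * ∑ t ∈ Finset.range T, q t := by
      rw [Finset.sum_sub_distrib, Finset.sum_const, ← Finset.mul_sum,
        Finset.card_range]; push_cast; ring
    rw [h1, h2] at hsum
    nlinarith [sq_nonneg (q T)]
  have hTpos : ∀ T : ℕ, 1 ≤ T → (0 : ℝ) < T := by
    intro T hT; exact_mod_cast Nat.lt_of_lt_of_le Nat.zero_lt_one hT
  constructor
  · intro T hT
    have h := key T hT
    have hTp := hTpos T hT
    simp only [one_div]
    rw [inv_mul_le_iff₀ hTp]
    have heq : (T:ℝ) * (B / ε + V / ε * (Ψ - (T : ℝ)⁻¹ * ∑ t ∈ Finset.range T, D t)) =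
        ((T : ℝ) * B + V * ((T : ℝ) * Ψ - ∑ t ∈ Finset.range T, D t)) / ε := by
      field_simp
    rw [heq, le_div_iff₀ hε]
    nlinarith
  · intro Dmin hD T hT
    have h := key T hT
    have hTp := hTpos T hT
    have hDsum : (T : ℝ) * Dmin ≤ ∑ t ∈ Finset.range T, D t := by
      calc (T : ℝ) * Dmin = ∑ t ∈ Finset.range T, Dmin := by
            rw [Finset.sum_const, Finset.card_range]; ring
        _ ≤ _ := Finset.sum_le_sum fun t _ => hD t
    have h2 : ε * ∑ t ∈ Finset.range T, q t ≤ T * B + V * (T * Ψ - T * Dmin) := by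
      nlinarith
    rw [one_div, inv_mul_le_iff₀ hTp]
    have heq : (T:ℝ) * (B / ε + V / ε * (Ψ - Dmin)) =
        ((T : ℝ) * B + V * ((T : ℝ) * Ψ - (T : ℝ) * Dmin)) / ε := by
      field_simp
    rw [heq, le_div_iff₀ hε]
    nlinarith
end
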